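/- arXiv:1809.09014 — 2 statements merged into one kernel-verified Lean document; each statement's English description precedes it below -/
import Mathlib

section
/- Let H = PΛP⁻¹ be an eigendecomposable k×k matrix with eigenvalues λ₁,…,λ_k, and let Σ be a k×k matrix. Then ∫₀ᵗ e^{-Hv} Σ e^{-Hᵀv} dv = P ( M ⊙ (P⁻¹ Σ P⁻ᵀ) ) Pᵀ, where M is the k×k matrix with entries M_{ij} = (1 - e^{-(λ_i+λ_j)t})/(λ_i+λ_j) when λ_i + λ_j ≠ 0 and M_{ij} = t when λ_i + λ_j = 0, and ⊙ denotes the entrywise (Hadamard) product. -/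
/-!
Writing `H = P Λ P⁻¹`, we have `e^{-vH} Σ e^{-vHᵀ} = P (D_v A D_v) Pᵀ` with `D_v = diag(e^{-vλ})`
and `A = P⁻¹ Σ P⁻ᵀ`. The middle factor is the Hadamard product of `A` with
`(e^{-v(λ_a+λ_b)})_{ab}`, and `∫₀ᵗ e^{-vμ} dv` is `(1 - e^{-μt})/μ`, or `t` when `μ = 0`; so
integrating entrywise gives `M ⊙ A`.
-/

open Matrix MeasureTheory

namespace Matrix

variable {m n p q : Type*}

theorem diagonal_mul_mul_diagonal_eq_hadamard [Fintype m] [Fintype n] [DecidableEq m]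
    [DecidableEq n] {α : Type*} [NonUnitalCommSemiring α] (d : m → α) (A : Matrix m n α)
    (e : n → α) : diagonal d * A * diagonal e = of (fun a b => d a * e b) ⊙ A := by
  ext a b
  simp only [mul_diagonal, diagonal_mul, hadamard_apply, of_apply]
  exact mul_right_comm _ _ _

theorem exp_smul_conj_diagonal [Fintype n] [DecidableEq n] {P : Matrix n n ℂ} (hP : IsUnit P)
    (Λ : n → ℂ) (c : ℂ) :
    NormedSpace.exp (c • (P * diagonal Λ * P⁻¹)) =
      P * diagonal (fun a => Complex.exp (c * Λ a)) * P⁻¹ := by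
  rw [← Matrix.smul_mul, ← Matrix.mul_smul, ← diagonal_smul, exp_conj _ _ hP, exp_diagonal]
  congr 3
  ext a
  simp [Complex.exp_eq_exp_ℂ]

theorem exp_smul_mul_mul_exp_smul_transpose [Fintype n] [DecidableEq n] {H P : Matrix n n ℂ}
    (hP : IsUnit P) {Λ : n → ℂ} (hH : H = P * diagonal Λ * P⁻¹) (c : ℂ) (S : Matrix n n ℂ) :
    NormedSpace.exp (c • H) * S * NormedSpace.exp (c • Hᵀ) =
      P * (of (fun a b => Complex.exp (c * (Λ a + Λ b))) ⊙ (P⁻¹ * S * P⁻¹ᵀ)) * Pᵀ := by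
  rw [← transpose_smul, exp_transpose, hH, exp_smul_conj_diagonal hP, transpose_mul,
    transpose_mul, diagonal_transpose]
  simp_rw [mul_add, Complex.exp_add, ← diagonal_mul_mul_diagonal_eq_hadamard, Matrix.mul_assoc]

theorem intervalIntegral_mul_mul_apply [Fintype n] [Fintype p] {𝕜 : Type*} [RCLike 𝕜]
    (X : Matrix m n 𝕜) (F : ℝ → Matrix n p 𝕜) (Y : Matrix p q 𝕜) {a b : ℝ}
    (hF : ∀ k l, IntervalIntegrable (fun v => F v k l) volume a b) (i : m) (j : q) :
    ∫ v in a..b, (X * F v * Y) i j = (X * of (fun k l => ∫ v in a..b, F v k l) * Y) i j := by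
  have hrow : ∀ l, IntervalIntegrable (fun v => ∑ k, X i k * F v k l) volume a b := fun l => by
    simpa only [← Finset.sum_fn] using
      IntervalIntegrable.sum _ fun k _ => (hF k l).const_mul (X i k)
  simp only [mul_apply, of_apply]
  rw [intervalIntegral.integral_finsetSum fun l _ => (hrow l).mul_const _]
  refine Finset.sum_congr rfl fun l _ => ?_
  rw [intervalIntegral.integral_mul_const, intervalIntegral.integral_finsetSum
    fun k _ => (hF k l).const_mul _]
  simp_rw [intervalIntegral.integral_const_mul]

end Matrix

theorem integral_exp_neg_mul_complex (μ : ℂ) (t : ℝ) :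
    ∫ v in (0:ℝ)..t, Complex.exp (-μ * v) =
      if μ = 0 then (t : ℂ) else (1 - Complex.exp (-μ * t)) / μ := by
  split_ifs with hμ
  · simp [hμ]
  · rw [integral_exp_mul_complex (neg_ne_zero.mpr hμ)]
    simp only [Complex.ofReal_zero, mul_zero, Complex.exp_zero]
    rw [div_neg, ← neg_div, neg_sub]

theorem ou_covariance_closed_form_general {k : ℕ}
    (H P Sg : Matrix (Fin k) (Fin k) ℂ) (Λ : Fin k → ℂ)
    (hP : IsUnit P.det)
    (hH : H = P * Matrix.diagonal Λ * P⁻¹)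
    (t : ℝ)
    (M : Matrix (Fin k) (Fin k) ℂ)
    (hM : ∀ i j, M i j =
      if Λ i + Λ j = 0 then (t : ℂ)
      else (1 - Complex.exp (-(Λ i + Λ j) * t)) / (Λ i + Λ j)) :
    ∀ i j,
      (∫ v in (0:ℝ)..t,
        (NormedSpace.exp ((-(v : ℂ)) • H) * Sg *
          NormedSpace.exp ((-(v : ℂ)) • Hᵀ)) i j)
      = (P * (Matrix.hadamard M (P⁻¹ * Sg * (P⁻¹)ᵀ)) * Pᵀ) i j := by
  intro i j
  have hweight : ∀ a b, ∫ v in (0:ℝ)..t, Complex.exp (-(v : ℂ) * (Λ a + Λ b)) = M a b := by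
    intro a b
    rw [hM, ← integral_exp_neg_mul_complex]
    congr 1 with v
    ring_nf
  simp_rw [exp_smul_mul_mul_exp_smul_transpose ((isUnit_iff_isUnit_det P).mpr hP) hH]
  rw [intervalIntegral_mul_mul_apply _ _ _ fun a b => Continuous.intervalIntegrable
    (by simp only [hadamard_apply, of_apply]; fun_prop) _ _]
  simp only [hadamard_apply, of_apply, intervalIntegral.integral_mul_const, hweight]
  rfl

/-- Closed form for the OU covariance integral
`∫₀ᵗ e^{-Hv} Σ e^{-Hᵀv} dv = P (M ⊙ (P⁻¹ Σ P⁻ᵀ)) Pᵀ` for an eigendecomposable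
`H = P Λ P⁻¹`, where `M i j = (1 - e^{-(λᵢ+λⱼ)t})/(λᵢ+λⱼ)` when `λᵢ+λⱼ ≠ 0` and
`M i j = t` otherwise, and `⊙` is the Hadamard (entrywise) product. -/
theorem ou_covariance_closed_form {k : ℕ}
    (H P Sg : Matrix (Fin k) (Fin k) ℂ) (Λ : Fin k → ℂ)
    (hP : IsUnit P.det)
    (hH : H = P * Matrix.diagonal Λ * P⁻¹)
    (t : ℝ) (ht : 0 < t)
    (M : Matrix (Fin k) (Fin k) ℂ)
    (hM : ∀ i j, M i j =
      if Λ i + Λ j = 0 then (t : ℂ)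
      else (1 - Complex.exp (-(Λ i + Λ j) * t)) / (Λ i + Λ j)) :
    ∀ i j,
      (∫ v in (0:ℝ)..t,
        (NormedSpace.exp ((-(v : ℂ)) • H) * Sg *
          NormedSpace.exp ((-(v : ℂ)) • Hᵀ)) i j)
      = (P * (Matrix.hadamard M (P⁻¹ * Sg * (P⁻¹)ᵀ)) * Pᵀ) i j :=
  ou_covariance_closed_form_general H P Sg Λ hP hH t M hM
end

section
/- Consider a rooted tree with tips 1,…,N whose trait transition density from parent j to child i is exp(x_iᵀA_i x_i + x_iᵀb_i + x_jᵀC_i x_j + x_jᵀd_i + x_jᵀE_i x_i + f_i), with each A_i + L_i symmetric negative-definite where L_i is defined recursively below. Then for every internal node j there exist a matrix L_j, vector m_j and scalar r_j such that the density of all tip data descending from j, conditional on x_j, equals exp(x_jᵀL_j x_j + x_jᵀm_j + r_j); furthermore L_j, m_j, r_j are given by summing, over tip children i of j, the terms (C_i, d_i + E_i x_i, x_iᵀA_i x_i + x_iᵀb_i + f_i), and over internal children i of j, the terms (C_i - (1/4)E_i(A_i+L_i)⁻¹E_iᵀ, d_i - (1/2)E_i(A_i+L_i)⁻¹(b_i+m_i),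 f_i + r_i + (k_i/2)log(2π) - (1/2)log|(-2)(A_i+L_i)| - (1/4)(b_i+m_i)ᵀ(A_i+L_i)⁻¹(b_i+m_i)). -/
/-!
For a negative-definite `S`, completing the square and substituting `y = B x`, where
`-S = Bᵀ B`, gives the Gaussian integral
`∫ exp (xᵀ S x + xᵀ u) dx = √(π ^ k / det (-S)) * exp (-uᵀ S⁻¹ u / 4)`.
If the subtree below an internal child `i` has density `exp (xᵢᵀ Lᵢ xᵢ + xᵢᵀ mᵢ + rᵢ)`, the
integrand for that child is of this form with `S = Aᵢ + Lᵢ` and `u = bᵢ + mᵢ + Eᵢᵀ xⱼ`, and the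
result is again a quadratic exponential in `xⱼ`, with the pruning coefficients. Products of
quadratic exponentials add their coefficients, so the claim follows by induction on the tree.
-/

open Matrix MeasureTheory

/-- Coefficients of a quadratic-exponential transition density along the branch from a
parent node of dimension `kj` to a child node of dimension `ki`. -/
structure EdgeData (kj ki : ℕ) where
  A : Matrix (Fin ki) (Fin ki) ℝ
  b : Fin ki → ℝ
  C : Matrix (Fin kj) (Fin kj) ℝ
  d : Fin kj → ℝ
  E : Matrix (Fin kj) (Fin ki) ℝ
  f : ℝ

/-- The transition density `exp(xᵢᵀAxᵢ + xᵢᵀb + xⱼᵀCxⱼ + xⱼᵀd + xⱼᵀExᵢ + f)` from parent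
value `xj` to child value `xi`. -/
noncomputable def transDensity {kj ki : ℕ} (e : EdgeData kj ki)
    (xi : Fin ki → ℝ) (xj : Fin kj → ℝ) : ℝ :=
  Real.exp (xi ⬝ᵥ e.A.mulVec xi + xi ⬝ᵥ e.b + xj ⬝ᵥ e.C.mulVec xj + xj ⬝ᵥ e.d
    + xj ⬝ᵥ e.E.mulVec xi + e.f)

/-- A rooted (sub)tree whose root node has trait dimension `kj`: each child of the root is
either a tip with observed trait vector, or an internal node carrying its own subtree;
every child edge carries transition-density coefficients. -/
inductive GTree : ℕ → Type where
  | node (kj nT nI : ℕ)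
      (tipDim : Fin nT → ℕ)
      (tipEdge : (i : Fin nT) → EdgeData kj (tipDim i))
      (tipX : (i : Fin nT) → Fin (tipDim i) → ℝ)
      (intDim : Fin nI → ℕ)
      (intEdge : (i : Fin nI) → EdgeData kj (intDim i))
      (sub : (i : Fin nI) → GTree (intDim i)) : GTree kj

/-- The density of all tip data descending from the root of `T`, conditional on the root
trait value `xj`: the product over tip children of the transition density, times the
product over internal children of the integral over the child value of the transition
density times the subtree density. -/
noncomputable def treeDensity : {kj : ℕ} → GTree kj → (Fin kj → ℝ) → ℝ
  | _, .node _ _ _ _ tipEdge tipX _ intEdge sub, xj =>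
      (∏ i, transDensity (tipEdge i) (tipX i) xj) *
      ∏ i, ∫ xi : Fin _ → ℝ, transDensity (intEdge i) xi xj * treeDensity (sub i) xi

/-- The recursively defined coefficients `(L, m, r)`: sums over tip children of
`(Cᵢ, dᵢ + Eᵢxᵢ, xᵢᵀAᵢxᵢ + xᵢᵀbᵢ + fᵢ)` and over internal children of
`(Cᵢ - ¼Eᵢ(Aᵢ+Lᵢ)⁻¹Eᵢᵀ, dᵢ - ½Eᵢ(Aᵢ+Lᵢ)⁻¹(bᵢ+mᵢ),
fᵢ + rᵢ + (kᵢ/2)log(2π) - ½log|(-2)(Aᵢ+Lᵢ)| - ¼(bᵢ+mᵢ)ᵀ(Aᵢ+Lᵢ)⁻¹(bᵢ+mᵢ))`. -/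
noncomputable def treeCoefs :
    {kj : ℕ} → GTree kj → Matrix (Fin kj) (Fin kj) ℝ × (Fin kj → ℝ) × ℝ
  | _, .node _ _ _ _ tipEdge tipX intDim intEdge sub =>
      ( (∑ i, (tipEdge i).C)
          + ∑ i, ((intEdge i).C
            - ((1:ℝ)/4) • ((intEdge i).E
                * ((intEdge i).A + (treeCoefs (sub i)).1)⁻¹ * ((intEdge i).E)ᵀ)),
        (∑ i, ((tipEdge i).d + (tipEdge i).E.mulVec (tipX i)))
          + ∑ i, ((intEdge i).d
            - ((1:ℝ)/2) • (((intEdge i).E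
                * ((intEdge i).A + (treeCoefs (sub i)).1)⁻¹).mulVec
                  ((intEdge i).b + (treeCoefs (sub i)).2.1))),
        (∑ i, (tipX i ⬝ᵥ (tipEdge i).A.mulVec (tipX i)
            + tipX i ⬝ᵥ (tipEdge i).b + (tipEdge i).f))
          + ∑ i, ((intEdge i).f + (treeCoefs (sub i)).2.2
            + ((intDim i : ℝ)/2) * Real.log (2 * Real.pi)
            - (1/2) * Real.log (((-2:ℝ) • ((intEdge i).A + (treeCoefs (sub i)).1)).det)
            - (1/4) * (((intEdge i).b + (treeCoefs (sub i)).2.1) ⬝ᵥ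
                ((intEdge i).A + (treeCoefs (sub i)).1)⁻¹.mulVec
                  ((intEdge i).b + (treeCoefs (sub i)).2.1))) )

/-- The hypothesis that, throughout the tree, each `Aᵢ + Lᵢ` (for internal children `i`)
is symmetric negative-definite. -/
def goodTree : {kj : ℕ} → GTree kj → Prop
  | _, .node _ _ _ _ _ _ _ intEdge sub =>
      (∀ i, (-((intEdge i).A + (treeCoefs (sub i)).1)).PosDef) ∧ ∀ i, goodTree (sub i)

open Real

theorem isSymm_of_posDef_neg {ι : Type*} {S : Matrix ι ι ℝ} (hS : (-S).PosDef) : S.IsSymm := by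
  simpa using (isHermitian_iff_isSymm.mp hS.isHermitian).neg

section Gaussian

variable {ι : Type*} [Fintype ι]

theorem integral_exp_neg_sum_sq : ∫ x : ι → ℝ, exp (-∑ i, x i ^ 2) = √π ^ Fintype.card ι := by
  simp_rw [← Finset.sum_neg_distrib, exp_sum]
  rw [integral_fintype_prod_volume_eq_prod (f := fun _ t => exp (-t ^ 2)), Finset.prod_const,
    Finset.card_univ]
  simpa using congrArg (· ^ Fintype.card ι) (integral_gaussian 1)

theorem dotProduct_mulVec_add_transpose_mulVec {κ : Type*} [Fintype κ] {M : Matrix ι ι ℝ}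
    (hM : M.IsSymm) (E : Matrix κ ι ℝ) (v : ι → ℝ) (y : κ → ℝ) :
    (v + Eᵀ *ᵥ y) ⬝ᵥ M *ᵥ (v + Eᵀ *ᵥ y)
      = v ⬝ᵥ M *ᵥ v + 2 * (y ⬝ᵥ (E * M) *ᵥ v) + y ⬝ᵥ (E * M * Eᵀ) *ᵥ y := by
  have hadj : ∀ w, Eᵀ *ᵥ y ⬝ᵥ w = y ⬝ᵥ E *ᵥ w := fun w => by
    rw [dotProduct_mulVec, mulVec_transpose]
  have hswap : v ⬝ᵥ M *ᵥ Eᵀ *ᵥ y = Eᵀ *ᵥ y ⬝ᵥ M *ᵥ v := by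
    rw [dotProduct_mulVec, ← mulVec_transpose, hM.eq, dotProduct_comm]
  simp only [mulVec_add, add_dotProduct, dotProduct_add]
  rw [hswap]
  simp only [hadj, mulVec_mulVec, Matrix.mul_assoc]
  ring

variable [DecidableEq ι]

theorem integral_comp_mulVec {E : Type*} [NormedAddCommGroup E] [NormedSpace ℝ E]
    {M : Matrix ι ι ℝ} (hM : M.det ≠ 0) (f : (ι → ℝ) → E) :
    ∫ x, f (M *ᵥ x) = |M.det|⁻¹ • ∫ x, f x := by
  have hM' : MeasurableEmbedding (toLin' M) :=
    (M.toLinearEquiv' (M.invertibleOfIsUnitDet hM.isUnit)).toContinuousLinearEquiv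
      |>.toHomeomorph.measurableEmbedding
  change ∫ x, f (toLin' M x) = _
  rw [← hM'.integral_map, Real.map_matrix_volume_pi_eq_smul_volume_pi hM,
    integral_smul_measure, abs_inv, ENNReal.toReal_ofReal (by positivity)]

open scoped MatrixOrder in
theorem integral_exp_neg_dotProduct_mulVec {T : Matrix ι ι ℝ} (hT : T.PosDef) :
    ∫ x : ι → ℝ, exp (-(x ⬝ᵥ T *ᵥ x)) = √(π ^ Fintype.card ι / T.det) := by
  obtain ⟨B, rfl⟩ := CStarAlgebra.nonneg_iff_eq_star_mul_self.mp hT.posSemidef.nonneg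
  have hdet : (star B * B).det = B.det ^ 2 := by simp [star_eq_conjTranspose, sq]
  have hB : B.det ≠ 0 := by
    have := hT.det_pos
    rw [hdet] at this
    exact pow_ne_zero_iff two_ne_zero |>.mp this.ne'
  have hquad : ∀ x, x ⬝ᵥ (star B * B) *ᵥ x = ∑ i, (B *ᵥ x) i ^ 2 := by
    intro x
    rw [← mulVec_mulVec, dotProduct_mulVec, star_eq_conjTranspose, vecMul_conjTranspose]
    simp [dotProduct, sq]
  have hsqrt : √(π ^ Fintype.card ι) = √π ^ Fintype.card ι := by
    rw [← sqrt_sq (pow_nonneg (sqrt_nonneg π) _), ← pow_mul, mul_comm, pow_mul, sq_sqrt pi_pos.le]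
  simp_rw [hquad]
  rw [integral_comp_mulVec hB (fun y : ι → ℝ => exp (-∑ i, y i ^ 2)), integral_exp_neg_sum_sq,
    hdet, sqrt_div' _ (sq_nonneg _), sqrt_sq_eq_abs, hsqrt, smul_eq_mul, inv_mul_eq_div]

theorem dotProduct_mulVec_add_dotProduct_eq_complete_square {S : Matrix ι ι ℝ} (hS : S.IsSymm)
    (hdet : IsUnit S.det) (x u : ι → ℝ) :
    x ⬝ᵥ S *ᵥ x + x ⬝ᵥ u
      = (x + (1 / 2 : ℝ) • S⁻¹ *ᵥ u) ⬝ᵥ S *ᵥ (x + (1 / 2 : ℝ) • S⁻¹ *ᵥ u)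
        - u ⬝ᵥ S⁻¹ *ᵥ u / 4 := by
  have hSv : S *ᵥ S⁻¹ *ᵥ u = u := by rw [mulVec_mulVec, mul_nonsing_inv S hdet, one_mulVec]
  have hcomm : S⁻¹ *ᵥ u ⬝ᵥ S *ᵥ x = x ⬝ᵥ u := by
    rw [dotProduct_mulVec, ← mulVec_transpose, hS.eq, dotProduct_comm, hSv]
  have hsame : S⁻¹ *ᵥ u ⬝ᵥ u = u ⬝ᵥ S⁻¹ *ᵥ u := dotProduct_comm _ _
  simp only [mulVec_add, mulVec_smul, hSv, add_dotProduct, dotProduct_add, smul_dotProduct,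
    dotProduct_smul, hcomm, hsame, smul_eq_mul]
  ring

theorem integral_exp_dotProduct_mulVec_add {S : Matrix ι ι ℝ} (hS : (-S).PosDef) (u : ι → ℝ) :
    ∫ x : ι → ℝ, exp (x ⬝ᵥ S *ᵥ x + x ⬝ᵥ u)
      = √(π ^ Fintype.card ι / (-S).det) * exp (-(u ⬝ᵥ S⁻¹ *ᵥ u) / 4) := by
  have hdet : IsUnit S.det := (isUnit_iff_isUnit_det S).mp ((IsUnit.neg_iff S).mp hS.isUnit)
  simp_rw [dotProduct_mulVec_add_dotProduct_eq_complete_square (isSymm_of_posDef_neg hS) hdet,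
    exp_sub]
  rw [integral_div, integral_add_right_eq_self (fun x => exp (x ⬝ᵥ S *ᵥ x))]
  have hneg : ∀ x : ι → ℝ, x ⬝ᵥ S *ᵥ x = -(x ⬝ᵥ (-S) *ᵥ x) := by simp [neg_mulVec]
  simp only [hneg]
  rw [integral_exp_neg_dotProduct_mulVec hS, div_eq_mul_inv, ← exp_neg, neg_div]

theorem sqrt_pi_pow_div_det_eq_exp {T : Matrix ι ι ℝ} (hT : T.PosDef) :
    √(π ^ Fintype.card ι / T.det)
      = exp ((Fintype.card ι / 2) * log (2 * π) - (1 / 2) * log ((2 : ℝ) • T).det) := by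
  have hD := hT.det_pos
  rw [det_smul, log_mul (by positivity) hD.ne', log_pow, log_mul two_ne_zero
    pi_ne_zero, ← exp_log (sqrt_pos.mpr (div_pos (pow_pos pi_pos _) hD)),
    log_sqrt (div_pos (pow_pos pi_pos _) hD).le, log_div (pow_pos pi_pos _).ne' hD.ne', log_pow]
  ring_nf

end Gaussian

noncomputable def quadExp {ι : Type*} [Fintype ι] (c : Matrix ι ι ℝ × (ι → ℝ) × ℝ) (x : ι → ℝ) :
    ℝ :=
  exp (x ⬝ᵥ c.1 *ᵥ x + x ⬝ᵥ c.2.1 + c.2.2)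

section QuadExp

variable {ι : Type*} [Fintype ι]

theorem quadExp_add (c c' : Matrix ι ι ℝ × (ι → ℝ) × ℝ) (x : ι → ℝ) :
    quadExp (c + c') x = quadExp c x * quadExp c' x := by
  simp only [quadExp, Prod.fst_add, Prod.snd_add, add_mulVec, dotProduct_add, ← exp_add]
  ring_nf

theorem quadExp_sum {κ : Type*} (s : Finset κ) (c : κ → Matrix ι ι ℝ × (ι → ℝ) × ℝ)
    (x : ι → ℝ) : quadExp (∑ i ∈ s, c i) x = ∏ i ∈ s, quadExp (c i) x := by
  induction s using Finset.cons_induction with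
  | empty => simp [quadExp]
  | cons a s ha ih => rw [Finset.sum_cons, Finset.prod_cons, quadExp_add, ih]

end QuadExp

def tipCoefs {kj ki : ℕ} (e : EdgeData kj ki) (x : Fin ki → ℝ) :
    Matrix (Fin kj) (Fin kj) ℝ × (Fin kj → ℝ) × ℝ :=
  (e.C, e.d + e.E *ᵥ x, x ⬝ᵥ e.A *ᵥ x + x ⬝ᵥ e.b + e.f)

noncomputable def pruneCoefs {kj ki : ℕ} (e : EdgeData kj ki)
    (c : Matrix (Fin ki) (Fin ki) ℝ × (Fin ki → ℝ) × ℝ) :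
    Matrix (Fin kj) (Fin kj) ℝ × (Fin kj → ℝ) × ℝ :=
  (e.C - ((1 : ℝ) / 4) • (e.E * (e.A + c.1)⁻¹ * e.Eᵀ),
    e.d - ((1 : ℝ) / 2) • ((e.E * (e.A + c.1)⁻¹) *ᵥ (e.b + c.2.1)),
    e.f + c.2.2 + ((ki : ℝ) / 2) * log (2 * π) - (1 / 2) * log ((-2 : ℝ) • (e.A + c.1)).det
      - (1 / 4) * ((e.b + c.2.1) ⬝ᵥ (e.A + c.1)⁻¹ *ᵥ (e.b + c.2.1)))

theorem treeCoefs_node {kj nT nI : ℕ} (tipDim : Fin nT → ℕ)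
    (tipEdge : (i : Fin nT) → EdgeData kj (tipDim i)) (tipX : (i : Fin nT) → Fin (tipDim i) → ℝ)
    (intDim : Fin nI → ℕ) (intEdge : (i : Fin nI) → EdgeData kj (intDim i))
    (sub : (i : Fin nI) → GTree (intDim i)) :
    treeCoefs (.node kj nT nI tipDim tipEdge tipX intDim intEdge sub)
      = ∑ i, tipCoefs (tipEdge i) (tipX i) + ∑ i, pruneCoefs (intEdge i) (treeCoefs (sub i)) := by
  simp only [treeCoefs, Prod.ext_iff, Prod.fst_add, Prod.snd_add, Prod.fst_sum, Prod.snd_sum]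
  exact ⟨rfl, rfl, rfl⟩

theorem transDensity_eq_quadExp {kj ki : ℕ} (e : EdgeData kj ki) (xi : Fin ki → ℝ)
    (xj : Fin kj → ℝ) : transDensity e xi xj = quadExp (tipCoefs e xi) xj := by
  simp only [transDensity, quadExp, tipCoefs, dotProduct_add]
  ring_nf

theorem integral_transDensity_mul_quadExp {kj ki : ℕ} (e : EdgeData kj ki)
    (c : Matrix (Fin ki) (Fin ki) ℝ × (Fin ki → ℝ) × ℝ) (hc : (-(e.A + c.1)).PosDef)
    (xj : Fin kj → ℝ) :
    ∫ xi, transDensity e xi xj * quadExp c xi = quadExp (pruneCoefs e c) xj := by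
  set S := e.A + c.1
  set v := e.b + c.2.1
  have hinv : S⁻¹.IsSymm := (isSymm_of_posDef_neg hc).inv
  have hintegrand : ∀ xi, transDensity e xi xj * quadExp c xi
      = exp (xi ⬝ᵥ S *ᵥ xi + xi ⬝ᵥ (v + e.Eᵀ *ᵥ xj))
        * exp (xj ⬝ᵥ e.C *ᵥ xj + xj ⬝ᵥ e.d + e.f + c.2.2) := by
    intro xi
    have hE : xi ⬝ᵥ e.Eᵀ *ᵥ xj = xj ⬝ᵥ e.E *ᵥ xi := by
      rw [dotProduct_mulVec, vecMul_transpose, dotProduct_comm]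
    simp only [transDensity, quadExp, ← exp_add, S, v, add_mulVec, dotProduct_add, hE]
    ring_nf
  have hscale : (-2 : ℝ) • S = (2 : ℝ) • -S := by rw [smul_neg, neg_smul]
  simp_rw [hintegrand]
  rw [integral_mul_const, integral_exp_dotProduct_mulVec_add hc, sqrt_pi_pow_div_det_eq_exp hc,
    Fintype.card_fin, dotProduct_mulVec_add_transpose_mulVec hinv, ← hscale, ← exp_add,
    ← exp_add]
  simp only [quadExp, pruneCoefs, sub_mulVec, dotProduct_sub, smul_mulVec, dotProduct_smul,
    smul_eq_mul, S, v]
  ring_nf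

/-- For every (sub)tree rooted at a node `j`, the density of the tip data
descending from `j` conditional on the root trait value `xj` equals
`exp(xjᵀ L xj + xjᵀ m + r)`, where `(L, m, r)` are given by the recursive pruning formulas
of `treeCoefs`. -/
theorem tree_density_quadratic {kj : ℕ} (T : GTree kj) (hT : goodTree T) :
    ∀ xj : Fin kj → ℝ,
      treeDensity T xj
        = Real.exp (xj ⬝ᵥ (treeCoefs T).1.mulVec xj + xj ⬝ᵥ (treeCoefs T).2.1
            + (treeCoefs T).2.2) := by
  induction T with
  | node kj nT nI tipDim tipEdge tipX intDim intEdge sub ih =>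
    obtain ⟨hpd, hsub⟩ := hT
    intro xj
    have hint (i : Fin nI) : ∫ xi, transDensity (intEdge i) xi xj * treeDensity (sub i) xi
        = quadExp (pruneCoefs (intEdge i) (treeCoefs (sub i))) xj := by
      simp_rw [ih i (hsub i)]
      exact integral_transDensity_mul_quadExp _ _ (hpd i) xj
    change _ = quadExp _ xj
    rw [treeCoefs_node, quadExp_add, quadExp_sum, quadExp_sum, treeDensity]
    simp_rw [hint, transDensity_eq_quadExp]
end
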